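/- Let p_max = max_j p_j and S = {j : p_j = p_max}. If 1 ∈ S and |S| > 1 (a 'moderate question'), then the majority-vote success probability Pr(a_1 | p; N) tends to 1/|S| as N → ∞. -/

import Mathlib

open Finset Filter

/-- Number of the `N` samples in `ω` equal to answer `j`. -/
def count {m N : ℕ} (ω : Fin N → Fin m) (j : Fin m) : ℕ :=
  (Finset.univ.filter fun i => ω i = j).card

/-- The set `J(ω)` of answers achieving the maximal count among the samples `ω`. -/
def maxSet {m N : ℕ} (ω : Fin N → Fin m) : Finset (Fin m) :=
  Finset.univ.filter fun j => ∀ k, count ω k ≤ count ω j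

/-- Majority-vote probability that answer `l` is returned after `N` i.i.d. samples
drawn from `p`: the most frequent answer is chosen, ties broken uniformly. -/
noncomputable def majorityProb {m : ℕ} (p : Fin m → ℝ) (N : ℕ) (l : Fin m) : ℝ :=
  ∑ ω : Fin N → Fin m, (∏ i, p (ω i)) *
    (if l ∈ maxSet ω then (1 : ℝ) / ((maxSet ω).card : ℝ) else 0)

/-!
Swapping two answers of equal probability preserves the law of the samples, so every answer
of `S` is returned with the same probability; since exactly one answer is returned,
`|S| · Pr(a_1) = 1 - ∑_{l ∉ S} Pr(a_l)`. An answer `l ∉ S` is returned only if it occurs at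
least as often as `a_1`, and the exponential (Chernoff) bound `[X_l ≥ X_1] ≤ t ^ (X_l - X_1)`
for `t ≥ 1` gives `Pr(a_l) ≤ (1 + p_l (t - 1) + p_1 (t⁻¹ - 1)) ^ N`. Since `p_l < p_1`, the base
is below `1` for a suitable `t`, so the tail vanishes.
-/

open Finset Filter Topology

section MajorityVote

variable {m N : ℕ}

lemma mem_maxSet {ω : Fin N → Fin m} {j : Fin m} :
    j ∈ maxSet ω ↔ ∀ k, count ω k ≤ count ω j := by
  simp [maxSet]

lemma maxSet_nonempty [NeZero m] (ω : Fin N → Fin m) : (maxSet ω).Nonempty := by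
  obtain ⟨j, -, hj⟩ := exists_max_image univ (count ω) univ_nonempty
  exact ⟨j, mem_maxSet.2 fun k => hj k (mem_univ k)⟩

lemma count_perm_comp (σ : Equiv.Perm (Fin m)) (ω : Fin N → Fin m) (j : Fin m) :
    count (σ ∘ ω) (σ j) = count ω j := by
  simp [count]

lemma maxSet_perm_comp (σ : Equiv.Perm (Fin m)) (ω : Fin N → Fin m) :
    maxSet (σ ∘ ω) = (maxSet ω).map σ.toEmbedding := by
  ext j
  obtain ⟨j, rfl⟩ := σ.surjective j
  rw [mem_map_equiv, Equiv.symm_apply_apply, mem_maxSet, mem_maxSet, ← σ.forall_congr_right]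
  simp only [count_perm_comp]

lemma majorityProb_perm_apply (p : Fin m → ℝ) (σ : Equiv.Perm (Fin m))
    (hp : ∀ j, p (σ j) = p j) (l : Fin m) :
    majorityProb p N (σ l) = majorityProb p N l := by
  unfold majorityProb
  refine (Fintype.sum_equiv ((Equiv.refl (Fin N)).arrowCongr σ) _ _ fun ω => ?_).symm
  have hω : (Equiv.refl (Fin N)).arrowCongr σ ω = σ ∘ ω := rfl
  simp only [hω, Function.comp_apply, hp, maxSet_perm_comp, card_map, mem_map_equiv,
    Equiv.symm_apply_apply]

lemma majorityProb_eq_of_apply_eq {p : Fin m → ℝ} {l l' : Fin m} (h : p l = p l') :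
    majorityProb p N l = majorityProb p N l' := by
  have hp : ∀ j, p (Equiv.swap l l' j) = p j := by
    intro j
    rcases eq_or_ne j l with rfl | hjl
    · simp [h]
    rcases eq_or_ne j l' with rfl | hjl'
    · simp [h]
    · rw [Equiv.swap_apply_of_ne_of_ne hjl hjl']
  simpa using (majorityProb_perm_apply (N := N) p (Equiv.swap l l') hp l).symm

lemma majorityProb_nonneg {p : Fin m → ℝ} (hp : ∀ j, 0 ≤ p j) (l : Fin m) :
    0 ≤ majorityProb p N l :=
  sum_nonneg fun ω _ => mul_nonneg (prod_nonneg fun i _ => hp (ω i)) (by positivity)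

lemma sum_majorityProb [NeZero m] (p : Fin m → ℝ) :
    ∑ l, majorityProb p N l = (∑ j, p j) ^ N := by
  have h_one (ω : Fin N → Fin m) :
      ∑ l, (if l ∈ maxSet ω then (1 : ℝ) / ((maxSet ω).card : ℝ) else 0) = 1 := by
    have : ((maxSet ω).card : ℝ) ≠ 0 := by simp [(maxSet_nonempty ω).ne_empty]
    rw [sum_ite_mem, univ_inter, sum_const, nsmul_eq_mul, mul_one_div, div_self this]
  simp only [majorityProb, Fintype.sum_pow]
  rw [sum_comm]
  simp only [← mul_sum, h_one, mul_one]

lemma card_mul_majorityProb_add_sum_compl [NeZero m] {p : Fin m → ℝ} {S : Finset (Fin m)}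
    {z : Fin m} (hS : ∀ l ∈ S, p l = p z) :
    S.card * majorityProb p N z + ∑ l ∈ Sᶜ, majorityProb p N l = (∑ j, p j) ^ N := by
  rw [← sum_majorityProb, ← sum_add_sum_compl S, sum_congr rfl fun l hl =>
    majorityProb_eq_of_apply_eq (hS l hl), sum_const, nsmul_eq_mul]

lemma prod_apply_eq_prod_pow_count {M : Type*} [CommMonoid M] (f : Fin m → M)
    (ω : Fin N → Fin m) : ∏ i, f (ω i) = ∏ j, f j ^ count ω j := by
  rw [← prod_fiberwise' univ ω f]
  simp [count]

/-- Per-sample factor of the Chernoff weight `t ^ (count ω l - count ω z)`. -/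
noncomputable def tilt (l z : Fin m) (t : ℝ) (j : Fin m) : ℝ :=
  if j = l then t else if j = z then t⁻¹ else 1

lemma tilt_nonneg {l z : Fin m} {t : ℝ} (ht : 0 ≤ t) (j : Fin m) : 0 ≤ tilt l z t j := by
  unfold tilt; split_ifs <;> positivity

lemma prod_tilt_apply {l z : Fin m} (hlz : l ≠ z) (t : ℝ) (ω : Fin N → Fin m) :
    ∏ i, tilt l z t (ω i) = t ^ count ω l * t⁻¹ ^ count ω z := by
  rw [prod_apply_eq_prod_pow_count, Fintype.prod_eq_mul l z hlz fun j hj => by simp [tilt, hj]]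
  simp [tilt, hlz.symm]

lemma sum_mul_tilt {p : Fin m → ℝ} {l z : Fin m} (hlz : l ≠ z) (t : ℝ) :
    ∑ j, p j * tilt l z t j = ∑ j, p j + p l * (t - 1) + p z * (t⁻¹ - 1) := by
  have h (j : Fin m) : p j * tilt l z t j =
      p j + ((if j = l then p j * (t - 1) else 0) + (if j = z then p j * (t⁻¹ - 1) else 0)) := by
    unfold tilt
    split_ifs with h₁ h₂ <;> first | exact absurd (h₁.symm.trans h₂) hlz | ring
  simp only [h, sum_add_distrib, sum_ite_eq', mem_univ, if_true, add_assoc]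

lemma majorityProb_le_sum_mul_tilt_pow {p : Fin m → ℝ} (hp : ∀ j, 0 ≤ p j) {l z : Fin m}
    (hlz : l ≠ z) {t : ℝ} (ht : 1 ≤ t) :
    majorityProb p N l ≤ (∑ j, p j * tilt l z t j) ^ N := by
  rw [Fintype.sum_pow]
  refine sum_le_sum fun ω _ => ?_
  rw [prod_mul_distrib]
  refine mul_le_mul_of_nonneg_left ?_ (prod_nonneg fun i _ => hp (ω i))
  split_ifs with hl
  · have hcard : (1 : ℝ) ≤ (maxSet ω).card := by exact_mod_cast card_pos.2 ⟨l, hl⟩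
    have hwin : t ^ count ω z ≤ t ^ count ω l := pow_le_pow_right₀ ht (mem_maxSet.1 hl z)
    calc (1 : ℝ) / (maxSet ω).card ≤ 1 := div_le_one_of_le₀ hcard (by positivity)
      _ ≤ t ^ count ω l * t⁻¹ ^ count ω z := by
        rw [inv_pow, ← div_eq_mul_inv, one_le_div (by positivity)]
        exact hwin
      _ = ∏ i, tilt l z t (ω i) := (prod_tilt_apply hlz t ω).symm
  · exact prod_nonneg fun i _ => tilt_nonneg (by linarith) _

lemma exists_one_le_add_lt_zero {a q : ℝ} (ha : 0 ≤ a) (haq : a < q) :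
    ∃ t : ℝ, 1 ≤ t ∧ a * (t - 1) + q * (t⁻¹ - 1) < 0 := by
  have hq : 0 < q := ha.trans_lt haq
  refine ⟨2 * q / (q + a), by rw [one_le_div (by linarith)]; linarith, ?_⟩
  have : a * (2 * q / (q + a) - 1) + q * ((2 * q / (q + a))⁻¹ - 1) =
      -(q - a) ^ 2 / (2 * (q + a)) := by
    field_simp
    ring
  rw [this, neg_div, neg_lt_zero]
  exact div_pos (by nlinarith) (by linarith)

lemma tendsto_majorityProb_zero_of_lt {p : Fin m → ℝ} (hp : ∀ j, 0 ≤ p j) (hsum : ∑ j, p j = 1)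
    {l z : Fin m} (hlz : p l < p z) :
    Tendsto (fun N => majorityProb p N l) atTop (𝓝 0) := by
  have hne : l ≠ z := fun h => hlz.ne (congrArg p h)
  obtain ⟨t, ht, hr⟩ := exists_one_le_add_lt_zero (hp l) hlz
  have hr_nonneg : 0 ≤ ∑ j, p j * tilt l z t j :=
    sum_nonneg fun j _ => mul_nonneg (hp j) (tilt_nonneg (by linarith) j)
  have hr_lt_one : ∑ j, p j * tilt l z t j < 1 := by
    rw [sum_mul_tilt hne, hsum]
    linarith
  exact squeeze_zero (fun N => majorityProb_nonneg hp l)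
    (fun N => majorityProb_le_sum_mul_tilt_pow hp hne ht)
    (tendsto_pow_atTop_nhds_zero_of_lt_one hr_nonneg hr_lt_one)

end MajorityVote

theorem moderate_question_tendsto_inv_card_general {m : ℕ} (hm : 0 < m) (p : Fin m → ℝ)
    (hnn : ∀ j, 0 ≤ p j) (hsum : ∑ j, p j = 1)
    (S : Finset (Fin m)) (hS : S = Finset.univ.filter fun j => ∀ k, p k ≤ p j)
    (hmem : (⟨0, hm⟩ : Fin m) ∈ S) :
    Tendsto (fun N => majorityProb p N ⟨0, hm⟩) atTop (nhds (1 / (S.card : ℝ))) := by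
  have : NeZero m := ⟨hm.ne'⟩
  set z : Fin m := ⟨0, hm⟩
  have hmax : ∀ k, p k ≤ p z := by simpa [hS] using hmem
  have hS_eq : ∀ l ∈ S, p l = p z := fun l hl =>
    (hmax l).antisymm (by simp only [hS, mem_filter] at hl; exact hl.2 z)
  have hSc_lt : ∀ l ∈ Sᶜ, p l < p z := fun l hl => by
    obtain ⟨k, hk⟩ : ∃ k, p l < p k := by simpa [hS] using hl
    exact hk.trans_le (hmax k)
  have htail : Tendsto (fun N => ∑ l ∈ Sᶜ, majorityProb p N l) atTop (𝓝 0) := by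
    simpa using tendsto_finsetSum Sᶜ fun l hl =>
      tendsto_majorityProb_zero_of_lt hnn hsum (hSc_lt l hl)
  have hlim : Tendsto (fun N => (1 - ∑ l ∈ Sᶜ, majorityProb p N l) / S.card) atTop
      (𝓝 (1 / S.card)) := by
    simpa only [sub_zero] using (tendsto_const_nhds.sub htail).div_const (S.card : ℝ)
  have hcard : (S.card : ℝ) ≠ 0 := Nat.cast_ne_zero.2 (card_ne_zero_of_mem hmem)
  refine hlim.congr fun N => ?_
  have htotal := card_mul_majorityProb_add_sum_compl (N := N) hS_eq
  rw [hsum, one_pow] at htotal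
  rw [div_eq_iff hcard]
  linarith

/-- For a moderate question (`a_1` is among the `|S| > 1` most likely
answers), the majority-vote success probability tends to `1/|S|` as `N → ∞`. -/
theorem moderate_question_tendsto_inv_card {m : ℕ} (hm : 0 < m) (p : Fin m → ℝ)
    (hnn : ∀ j, 0 ≤ p j) (hsum : ∑ j, p j = 1)
    (S : Finset (Fin m)) (hS : S = Finset.univ.filter fun j => ∀ k, p k ≤ p j)
    (hmem : (⟨0, hm⟩ : Fin m) ∈ S) (hcard : 1 < S.card) :
    Tendsto (fun N => majorityProb p N ⟨0, hm⟩) atTop (nhds (1 / (S.card : ℝ))) :=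
  moderate_question_tendsto_inv_card_general hm p hnn hsum S hS hmem
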